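/- For a real number β and integers ρ_1 ≥ ρ_2 ≥ ⋯ ≥ ρ_{2l} ≥ 0, the Pfaffian of the 2l×2l antisymmetric matrix with (j,k) entry sgn(k-j) · β^{|ρ_j - ρ_k + k - j|} equals β^{l} · β^{Σ_{j=1}^{2l} (-1)^{j-1} ρ_j}; equivalently β^{-l} Pf[sgn(k-j) β^{|ρ_j-ρ_k+k-j|}] = β^{Σ_{j}(-1)^{j-1}ρ_j}. -/

import Mathlib

open Finset

/-- The first element of the `i`-th pair in `Fin (2*n)`. -/
def pairLo {n : ℕ} (i : Fin n) : Fin (2 * n) := ⟨2 * i.1, by have := i.isLt; omega⟩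

/-- The second element of the `i`-th pair in `Fin (2*n)`. -/
def pairHi {n : ℕ} (i : Fin n) : Fin (2 * n) := ⟨2 * i.1 + 1, by have := i.isLt; omega⟩

/-- The Pfaffian of a `2n × 2n` matrix, defined as the sum over perfect matchings
(encoded as permutations in canonical form) of the signed product of entries. -/
def pf {n : ℕ} {R : Type*} [CommRing R] (A : Matrix (Fin (2 * n)) (Fin (2 * n)) R) : R :=
  ∑ σ ∈ Finset.univ.filter
      (fun σ : Equiv.Perm (Fin (2 * n)) =>
        (∀ i : Fin n, σ (pairLo i) < σ (pairHi i)) ∧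
        ∀ i j : Fin n, i < j → σ (pairLo i) < σ (pairLo j)),
    (Equiv.Perm.sign σ : ℤ) • ∏ i : Fin n, A (σ (pairLo i)) (σ (pairHi i))

/-!
For `j < k` the entry is `β ^ (f j - f k) = β ^ f j * (β ^ f k)⁻¹` with `f j = ρ j + (2l - j)`
strictly decreasing, so above the diagonal the matrix has the form `a j * b k`. For such a matrix
the terms of the Pfaffian cancel in pairs. In a matching other than `{0,1}, {2,3}, …`, let `{p, q}`
be the pair with the smallest `p` such that `q ≠ p + 1`. Then `p + 1` is the smaller element of
another pair `{p + 1, q'}`, and exchanging `q` and `q'` is an involution on such matchings (the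
chosen pair keeps its smaller element `p`, and `q' ≠ p + 1`) which flips the sign and preserves
`∏ a b`. Only the matching `{0,1}, {2,3}, …` survives, with weight
`∏ β ^ (ρ (2i) - ρ (2i+1) + 1)`.
-/

open Finset Equiv

section Matchings

variable {n : ℕ}

lemma pairLo_injective : Function.Injective (pairLo (n := n)) := by
  intro i j h
  exact Fin.ext (by simpa [pairLo] using congrArg Fin.val h)

lemma pairHi_injective : Function.Injective (pairHi (n := n)) := by
  intro i j h
  exact Fin.ext (by simpa [pairHi] using congrArg Fin.val h)

lemma pairLo_lt_pairHi (i : Fin n) : pairLo i < pairHi i :=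
  Fin.lt_def.2 (Nat.lt_succ_self _)

lemma pairHi_sub_pairLo (i : Fin n) : (pairHi i : ℕ) - pairLo i = 1 :=
  Nat.add_sub_cancel_left _ _

lemma pairLo_ne_pairHi (i j : Fin n) : pairLo i ≠ pairHi j := by
  intro h
  have := congrArg Fin.val h
  simp only [pairLo, pairHi] at this
  omega

def pairIndex (x : Fin (2 * n)) : Fin n := ⟨x / 2, by omega⟩

lemma eq_pairLo_or_eq_pairHi (x : Fin (2 * n)) :
    x = pairLo (pairIndex x) ∨ x = pairHi (pairIndex x) := by
  rcases Nat.even_or_odd x.1 with ⟨k, hk⟩ | ⟨k, hk⟩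
  · left; ext; simp only [pairLo, pairIndex]; omega
  · right; ext; simp only [pairHi, pairIndex]; omega

lemma sum_pairs {M : Type*} [AddCommMonoid M] (f : Fin (2 * n) → M) :
    ∑ x, f x = ∑ i, (f (pairLo i) + f (pairHi i)) := by
  rw [← (finProdFinEquiv.trans (finCongr (Nat.mul_comm n 2))).sum_comp, Fintype.sum_prod_type]
  refine sum_congr rfl fun i _ => ?_
  rw [Fin.sum_univ_two]
  congr 2 <;> ext <;> simp [pairLo, pairHi, add_comm]

lemma sum_neg_one_pow_mul {R : Type*} [CommRing R] (x : Fin (2 * n) → R) :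
    ∑ j : Fin (2 * n), (-1 : R) ^ (j : ℕ) * x j = ∑ i, (x (pairLo i) - x (pairHi i)) := by
  refine (sum_pairs _).trans (sum_congr rfl fun i _ => ?_)
  have hlo : (-1 : R) ^ (pairLo i : ℕ) = 1 := (even_two_mul i.1).neg_one_pow
  have hhi : (-1 : R) ^ (pairHi i : ℕ) = -1 := (odd_two_mul_add_one i.1).neg_one_pow
  rw [hlo, hhi, one_mul, neg_one_mul, sub_eq_add_neg]

def IsCanonical (σ : Perm (Fin (2 * n))) : Prop :=
  (∀ i : Fin n, σ (pairLo i) < σ (pairHi i)) ∧ ∀ i j : Fin n, i < j → σ (pairLo i) < σ (pairLo j)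

instance (σ : Perm (Fin (2 * n))) : Decidable (IsCanonical σ) :=
  inferInstanceAs (Decidable ((∀ i : Fin n, σ (pairLo i) < σ (pairHi i)) ∧
    ∀ i j : Fin n, i < j → σ (pairLo i) < σ (pairLo j)))

lemma pf_eq_sum_isCanonical {R : Type*} [CommRing R] (A : Matrix (Fin (2 * n)) (Fin (2 * n)) R) :
    pf A = ∑ σ ∈ univ.filter IsCanonical,
      (Perm.sign σ : ℤ) • ∏ i : Fin n, A (σ (pairLo i)) (σ (pairHi i)) :=
  rfl

def IsTight (σ : Perm (Fin (2 * n))) (i : Fin n) : Prop :=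
  (σ (pairHi i) : ℕ) = σ (pairLo i) + 1

instance (σ : Perm (Fin (2 * n))) (i : Fin n) : Decidable (IsTight σ i) :=
  inferInstanceAs (Decidable ((σ (pairHi i) : ℕ) = σ (pairLo i) + 1))

lemma IsCanonical.pairLo_lt_pairLo_iff {σ : Perm (Fin (2 * n))} (hσ : IsCanonical σ)
    {i j : Fin n} : σ (pairLo i) < σ (pairLo j) ↔ i < j := by
  refine ⟨fun h => ?_, hσ.2 i j⟩
  rcases lt_trichotomy i j with hij | rfl | hji
  · exact hij
  · exact absurd h (lt_irrefl _)
  · exact absurd (hσ.2 j i hji) h.asymm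

lemma IsCanonical.strictMono_of_forall_isTight {σ : Perm (Fin (2 * n))} (hσ : IsCanonical σ)
    (htight : ∀ i, IsTight σ i) : StrictMono σ := by
  have hi_lt_lo : ∀ i j : Fin n, i < j → σ (pairHi i) < σ (pairLo j) := by
    intro i j hij
    have hlo := Fin.lt_def.1 (hσ.2 i j hij)
    have hne : (σ (pairLo j) : ℕ) ≠ σ (pairHi i) :=
      Fin.val_ne_of_ne (σ.injective.ne (pairLo_ne_pairHi j i))
    exact Fin.lt_def.2 (by rw [htight i] at hne ⊢; omega)
  intro x y hxy
  rcases eq_pairLo_or_eq_pairHi x with hx | hx <;> rcases eq_pairLo_or_eq_pairHi y with hy | hy <;>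
    rw [hx, hy] <;> rw [hx, hy, Fin.lt_def] at hxy <;> simp only [pairLo, pairHi] at hxy
  · exact hσ.2 _ _ (Fin.lt_def.2 (by omega))
  · rcases (show pairIndex x ≤ pairIndex y from Fin.le_def.2 (by omega)).lt_or_eq with h | h
    · exact (hσ.2 _ _ h).trans (hσ.1 _)
    · exact h ▸ hσ.1 _
  · exact hi_lt_lo _ _ (Fin.lt_def.2 (by omega))
  · exact (hi_lt_lo _ _ (Fin.lt_def.2 (by omega))).trans (hσ.1 _)

lemma filter_isCanonical_and_forall_isTight :
    univ.filter (fun σ : Perm (Fin (2 * n)) => IsCanonical σ ∧ ∀ i, IsTight σ i) = {1} := by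
  ext σ
  simp only [mem_filter, mem_univ, true_and, mem_singleton]
  constructor
  · rintro ⟨hσ, htight⟩
    exact Equiv.ext fun x => (hσ.strictMono_of_forall_isTight htight).apply_eq
  · rintro rfl
    refine ⟨⟨fun i => ?_, fun i j hij => ?_⟩, fun i => ?_⟩
    · simp only [Perm.one_apply, Fin.lt_def, pairLo, pairHi]; omega
    · simp only [Perm.one_apply, Fin.lt_def, pairLo] at hij ⊢; omega
    · simp only [IsTight, Perm.one_apply, pairLo, pairHi]

noncomputable def partner (σ : Perm (Fin (2 * n))) (i : Fin n) : Fin n :=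
  if h : ∃ j, (σ (pairLo j) : ℕ) = σ (pairLo i) + 1 then h.choose else i

lemma partner_congr {σ τ : Perm (Fin (2 * n))} (h : ∀ m, τ (pairLo m) = σ (pairLo m)) :
    partner τ = partner σ := by
  funext i
  simp only [partner, h]

noncomputable def swapHighs (σ : Perm (Fin (2 * n))) (i : Fin n) : Perm (Fin (2 * n)) :=
  σ * swap (pairHi i) (pairHi (partner σ i))

lemma swapHighs_pairLo (σ : Perm (Fin (2 * n))) (i m : Fin n) :
    swapHighs σ i (pairLo m) = σ (pairLo m) := by
  rw [swapHighs, Perm.mul_apply,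
    swap_apply_of_ne_of_ne (pairLo_ne_pairHi _ _) (pairLo_ne_pairHi _ _)]

lemma swapHighs_pairHi (σ : Perm (Fin (2 * n))) (i m : Fin n) :
    swapHighs σ i (pairHi m) = σ (pairHi (swap i (partner σ i) m)) := by
  rw [swapHighs, Perm.mul_apply, pairHi_injective.swap_apply]

lemma prod_swapHighs {R : Type*} [CommMonoid R] (a b : Fin (2 * n) → R)
    (σ : Perm (Fin (2 * n))) (i : Fin n) :
    ∏ m, a (swapHighs σ i (pairLo m)) * b (swapHighs σ i (pairHi m)) =
      ∏ m, a (σ (pairLo m)) * b (σ (pairHi m)) := by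
  simp only [prod_mul_distrib, swapHighs_pairLo, swapHighs_pairHi]
  rw [Equiv.prod_comp (swap i (partner σ i)) fun m => b (σ (pairHi m))]

def IsFirstLoose (σ : Perm (Fin (2 * n))) (i : Fin n) : Prop :=
  ¬IsTight σ i ∧ ∀ m < i, IsTight σ m

lemma exists_isFirstLoose {σ : Perm (Fin (2 * n))} (h : ¬∀ i, IsTight σ i) :
    ∃ i, IsFirstLoose σ i := by
  simp only [not_forall] at h
  obtain ⟨i, hi, hmin⟩ := wellFounded_lt.has_min {i | ¬IsTight σ i} h
  exact ⟨i, hi, fun m hm => by simpa using mt (hmin m) (not_not.2 hm)⟩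

lemma IsFirstLoose.unique {σ : Perm (Fin (2 * n))} {i j : Fin n} (hi : IsFirstLoose σ i)
    (hj : IsFirstLoose σ j) : i = j := by
  rcases lt_trichotomy i j with h | h | h
  · exact absurd (hj.2 i h) hi.1
  · exact h
  · exact absurd (hi.2 j h) hj.1

section FirstLoose

variable {σ : Perm (Fin (2 * n))} {i : Fin n}

/- `σ (pairLo i) + 1` is not a second element: not of a pair before `i` (those are tight), nor of
`i` (loose), nor of a pair after `i` (its first element would lie strictly in between). -/
lemma exists_pairLo_eq_succ (hσ : IsCanonical σ) (hi : IsFirstLoose σ i) :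
    ∃ j, (σ (pairLo j) : ℕ) = σ (pairLo i) + 1 := by
  have hlt := Fin.lt_def.1 (hσ.1 i)
  have hbound : (σ (pairLo i) : ℕ) + 1 < 2 * n := by
    have := hi.1; unfold IsTight at this; omega
  set v : Fin (2 * n) := ⟨σ (pairLo i) + 1, hbound⟩
  have hv : σ (σ.symm v) = v := σ.apply_symm_apply v
  rcases eq_pairLo_or_eq_pairHi (σ.symm v) with hx | hx <;> rw [hx] at hv
  · exact ⟨_, congrArg Fin.val hv⟩
  exfalso
  generalize pairIndex (σ.symm v) = k at hv
  have hk : (σ (pairHi k) : ℕ) = σ (pairLo i) + 1 := congrArg Fin.val hv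
  rcases lt_trichotomy k i with hki | rfl | hik
  · have := hi.2 k hki
    unfold IsTight at this
    exact hki.ne (pairLo_injective (σ.injective (Fin.ext (by omega))))
  · exact hi.1 hk
  · have h1 := Fin.lt_def.1 (hσ.2 i k hik)
    have h2 := Fin.lt_def.1 (hσ.1 k)
    omega

lemma pairLo_partner (hσ : IsCanonical σ) (hi : IsFirstLoose σ i) :
    (σ (pairLo (partner σ i)) : ℕ) = σ (pairLo i) + 1 := by
  have h := exists_pairLo_eq_succ hσ hi
  rw [partner, dif_pos h]
  exact h.choose_spec

lemma lt_partner (hσ : IsCanonical σ) (hi : IsFirstLoose σ i) : i < partner σ i :=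
  hσ.pairLo_lt_pairLo_iff.1 (Fin.lt_def.2 (by rw [pairLo_partner hσ hi]; omega))

lemma isCanonical_swapHighs (hσ : IsCanonical σ) (hi : IsFirstLoose σ i) :
    IsCanonical (swapHighs σ i) := by
  refine ⟨fun m => ?_, fun m m' hmm' => ?_⟩
  · rw [swapHighs_pairLo, swapHighs_pairHi]
    rcases eq_or_ne m i with rfl | hmi
    · rw [swap_apply_left]
      exact (hσ.2 _ _ (lt_partner hσ hi)).trans (hσ.1 _)
    rcases eq_or_ne m (partner σ i) with hmj | hmj
    · rw [hmj, swap_apply_right]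
      have hlo := pairLo_partner hσ hi
      have hhi := Fin.lt_def.1 (hσ.1 i)
      have hloose := hi.1
      unfold IsTight at hloose
      exact Fin.lt_def.2 (by omega)
    · rw [swap_apply_of_ne_of_ne hmi hmj]
      exact hσ.1 m
  · simpa only [swapHighs_pairLo] using hσ.2 m m' hmm'

lemma isFirstLoose_swapHighs (hσ : IsCanonical σ) (hi : IsFirstLoose σ i) :
    IsFirstLoose (swapHighs σ i) i := by
  have hj := lt_partner hσ hi
  refine ⟨fun htight => ?_, fun m hm => ?_⟩
  · unfold IsTight at htight
    rw [swapHighs_pairLo, swapHighs_pairHi, swap_apply_left, ← pairLo_partner hσ hi] at htight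
    exact (Fin.lt_def.1 (hσ.1 (partner σ i))).ne' htight
  · have htight := hi.2 m hm
    unfold IsTight at htight ⊢
    rw [swapHighs_pairLo, swapHighs_pairHi, swap_apply_of_ne_of_ne hm.ne (hm.trans hj).ne, htight]

lemma partner_swapHighs : partner (swapHighs σ i) = partner σ :=
  partner_congr (swapHighs_pairLo σ i)

lemma swapHighs_swapHighs : swapHighs (swapHighs σ i) i = σ := by
  rw [swapHighs, partner_swapHighs, swapHighs, mul_assoc, swap_mul_self, mul_one]

lemma sign_swapHighs (hσ : IsCanonical σ) (hi : IsFirstLoose σ i) :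
    Perm.sign (swapHighs σ i) = -Perm.sign σ := by
  rw [swapHighs, Perm.sign_mul, Perm.sign_swap (pairHi_injective.ne (lt_partner hσ hi).ne),
    mul_neg, mul_one]

end FirstLoose

end Matchings

section Pfaffian

variable {n : ℕ} {R : Type*} [CommRing R]

lemma sum_loose_eq_zero (a b : Fin (2 * n) → R) :
    ∑ σ ∈ univ.filter (fun σ : Perm (Fin (2 * n)) => IsCanonical σ ∧ ¬∀ i, IsTight σ i),
      (Perm.sign σ : ℤ) • ∏ m, a (σ (pairLo m)) * b (σ (pairHi m)) = 0 := by
  set S := univ.filter (fun σ : Perm (Fin (2 * n)) => IsCanonical σ ∧ ¬∀ i, IsTight σ i)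
  have hfirst : ∀ σ ∈ S, ∃ i, IsFirstLoose σ i :=
    fun σ hσ => exists_isFirstLoose (mem_filter.1 hσ).2.2
  have hmem : ∀ σ hσ, swapHighs σ (hfirst σ hσ).choose ∈ S := fun σ hσ => by
    have hi := (hfirst σ hσ).choose_spec
    have hcan := (mem_filter.1 hσ).2.1
    exact mem_filter.2 ⟨mem_univ _, isCanonical_swapHighs hcan hi,
      fun h => (isFirstLoose_swapHighs hcan hi).1 (h _)⟩
  refine sum_involution (fun σ hσ => swapHighs σ (hfirst σ hσ).choose) (fun σ hσ => ?_)
    (fun σ hσ _ => ?_) hmem (fun σ hσ => ?_)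
  all_goals
    have hcan := (mem_filter.1 hσ).2.1
    have hi := (hfirst σ hσ).choose_spec
  · rw [prod_swapHighs, sign_swapHighs hcan hi, Units.val_neg, neg_smul, add_neg_cancel]
  · exact fun h => units_ne_neg_self _ (by rw [← sign_swapHighs hcan hi, h])
  · rw [(hfirst _ (hmem σ hσ)).choose_spec.unique (isFirstLoose_swapHighs hcan hi),
      swapHighs_swapHighs]

theorem pf_eq_prod_of_eq_mul (A : Matrix (Fin (2 * n)) (Fin (2 * n)) R) (a b : Fin (2 * n) → R)
    (hA : ∀ j k, j < k → A j k = a j * b k) : pf A = ∏ i, A (pairLo i) (pairHi i) := by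
  rw [pf_eq_sum_isCanonical,
    sum_congr rfl fun σ hσ => by rw [prod_congr rfl fun i _ => hA _ _ ((mem_filter.1 hσ).2.1 i)],
    ← sum_filter_add_sum_filter_not _ (fun σ => ∀ i, IsTight σ i), filter_filter, filter_filter,
    sum_loose_eq_zero, add_zero]
  simp only [filter_isCanonical_and_forall_isTight, sum_singleton, Perm.sign_one, Units.val_one,
    one_smul, Perm.one_apply]
  exact prod_congr rfl fun i _ => (hA _ _ (pairLo_lt_pairHi i)).symm

end Pfaffian

section Exponents

variable {m : ℕ} {ρ : Fin m → ℕ}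

lemma Antitone.natAbs_sub_add_sub (hρ : Antitone ρ) {j k : Fin m} (hjk : j ≤ k) :
    ((ρ j : ℤ) - ρ k + (k : ℕ) - (j : ℕ)).natAbs = ρ j - ρ k + (k - j) := by
  have := hρ hjk
  have := Fin.le_def.1 hjk
  omega

lemma Antitone.pow_sub_add_sub {G₀ : Type*} [GroupWithZero G₀] (hρ : Antitone ρ) (x : G₀)
    {j k : Fin m} (hjk : j < k) :
    x ^ (ρ j - ρ k + (k - j)) = x ^ (ρ j + (m - j)) * (x ^ (ρ k + (m - k)))⁻¹ := by
  have := hρ hjk.le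
  have := Fin.lt_def.1 hjk
  have := k.isLt
  rw [← pow_sub_of_lt x (by omega)]
  congr 1
  omega

end Exponents

theorem pf_sgn_beta_matrix_general (l : ℕ) (β : ℝ)
    (ρ : Fin (2 * l) → ℕ) (hρ : Antitone ρ) :
    pf (Matrix.of fun j k : Fin (2 * l) =>
      (if j < k then (1 : ℝ) else if k < j then -1 else 0) *
        β ^ ((ρ j : ℤ) - (ρ k : ℤ) + ((k : ℕ) : ℤ) - ((j : ℕ) : ℤ)).natAbs) =
    β ^ ((l : ℤ) + ∑ j : Fin (2 * l), (-1 : ℤ) ^ (j : ℕ) * (ρ j : ℤ)) := by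
  rw [pf_eq_prod_of_eq_mul _ _ _ fun j k hjk => by
      rw [Matrix.of_apply, if_pos hjk, one_mul, hρ.natAbs_sub_add_sub hjk.le,
        hρ.pow_sub_add_sub β hjk],
    sum_neg_one_pow_mul]
  simp only [Matrix.of_apply, if_pos (pairLo_lt_pairHi _), one_mul,
    hρ.natAbs_sub_add_sub (pairLo_lt_pairHi _).le, pairHi_sub_pairLo]
  rw [prod_pow_eq_pow_sum, ← zpow_natCast]
  push_cast [Nat.cast_sub (hρ (pairLo_lt_pairHi _).le), sum_add_distrib]
  rw [sum_const, card_univ, Fintype.card_fin, nsmul_one, add_comm]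

/-- for weakly decreasing nonnegative integers `ρ_1 ≥ ⋯ ≥ ρ_{2l} ≥ 0` and `β ≠ 0`,
`Pf[sgn(k-j) β^{|ρ_j - ρ_k + k - j|}] = β^l · β^{Σ_{j=1}^{2l} (-1)^{j-1} ρ_j}`. -/
theorem pf_sgn_beta_matrix (l : ℕ) (β : ℝ) (hβ : β ≠ 0)
    (ρ : Fin (2 * l) → ℕ) (hρ : Antitone ρ) :
    pf (Matrix.of fun j k : Fin (2 * l) =>
      (if j < k then (1 : ℝ) else if k < j then -1 else 0) *
        β ^ ((ρ j : ℤ) - (ρ k : ℤ) + ((k : ℕ) : ℤ) - ((j : ℕ) : ℤ)).natAbs) =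
    β ^ ((l : ℤ) + ∑ j : Fin (2 * l), (-1 : ℤ) ^ (j : ℕ) * (ρ j : ℤ)) :=
  pf_sgn_beta_matrix_general l β ρ hρ
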